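/- arXiv:2009.02922 — 2 statements merged into one kernel-verified Lean document; each statement's English description precedes it below -/
import Mathlib

section
/- Let r ≥ 1, let B = B_1 × ⋯ × B_r be an r-grid, and let X ⊆ B be a basic set. Then there exist a linearly ordered set (S, <), a coordinate-wise monotone function f^r : B_1 × ⋯ × B_{r-1} → S and a function f_r : B_r → S such that X = {(b^r, b_r) ∈ (B_1 × ⋯ × B_{r-1}) × B_r : f^r(b^r) < f_r(b_r)}. -/
/-!
Write `x = (a, c)` with `c` the last coordinate. Monotonicity in the last coordinate gives one
linear preorder on `B_r`, that of `g c = f (a₀, c)`, for which every fibre `{c | f (a, c) < l}`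
is down-closed; so the fibre is the preimage under `g` of a lower set `cut a` of `S`, and
`(a, c) ∈ X ↔ Iic (g c) ≤ cut a`. Hence `X` is cut out by `f^r a = (cut a, f (a, c₀))` and
`f_r c = (Iic (g c), ⊤)`, compared lexicographically with lower sets ordered by reverse
inclusion. The second component of `f^r` breaks ties between equal cuts the way `f` orders the
first `r - 1` coordinates, which is what makes `f^r` coordinate-wise monotone.
-/

/-- A function `f` from an `r`-grid `∀ i, B i` to a linearly ordered set `S` is
coordinate-wise monotone if for every coordinate `i`, all `a, a'` in the remaining
coordinates and all `b, b'` in the `i`-th coordinate: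
`f(a ⊕_i b) ≤ f(a ⊕_i b') ↔ f(a' ⊕_i b) ≤ f(a' ⊕_i b')`. -/
def CoordWiseMonotone {r : ℕ} {B : Fin r → Type} {S : Type} [LinearOrder S]
    (f : (∀ i, B i) → S) : Prop :=
  ∀ (i : Fin r) (x x' : ∀ j, B j) (b b' : B i),
    (f (Function.update x i b) ≤ f (Function.update x i b') ↔
      f (Function.update x' i b) ≤ f (Function.update x' i b'))

/-- A subset `X` of the grid `∀ i, B i` is basic if `X = {x | f x < l}` for some
coordinate-wise monotone function `f` into a linearly ordered set `S` and some `l ∈ S`. -/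
def IsBasicSet {r : ℕ} {B : Fin r → Type} (X : Set (∀ i, B i)) : Prop :=
  ∃ (S : Type) (_ : LinearOrder S) (f : (∀ i, B i) → S) (l : S),
    CoordWiseMonotone f ∧ X = {x | f x < l}

open Function OrderDual

namespace CoordWiseMonotone

section Grid

variable {r : ℕ} {B : Fin r → Type} {S T : Type} [LinearOrder S] [LinearOrder T]

theorem comp_strictMono {f : (∀ i, B i) → S} (hf : CoordWiseMonotone f) {φ : S → T}
    (hφ : StrictMono φ) : CoordWiseMonotone (φ ∘ f) := by
  intro i x x' b b'
  simpa only [comp_apply, hφ.le_iff_le] using hf i x x' b b'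

theorem lex {h : (∀ i, B i) → S} {k : (∀ i, B i) → T} (hh : CoordWiseMonotone h)
    (hk : ∀ i x (b b' : B i),
      h (update x i b) ≤ h (update x i b') → k (update x i b) ≤ k (update x i b')) :
    CoordWiseMonotone fun x => toLex (k x, h x) := by
  intro i x x' b b'
  have lex_le_iff : ∀ y, toLex (k (update y i b), h (update y i b)) ≤
      toLex (k (update y i b'), h (update y i b')) ↔ h (update y i b) ≤ h (update y i b') := by
    intro y
    refine ⟨fun hle => ?_, fun hle => Prod.Lex.toLex_mono ⟨hk i y b b' hle, hle⟩⟩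
    by_contra! hlt
    exact hle.not_gt <|
      Prod.Lex.toLex_strictMono (Prod.mk_lt_mk_of_le_of_lt (hk i y b' b hlt.le) hlt)
  exact (lex_le_iff x).trans ((hh i x x' b b').trans (lex_le_iff x').symm)

end Grid

section Snoc

variable {m : ℕ} {B : Fin (m + 1) → Type} {S : Type} [LinearOrder S] {f : (∀ i, B i) → S}

theorem snoc_le_snoc_iff (hf : CoordWiseMonotone f) (a a' : ∀ i : Fin m, B i.castSucc)
    (c c' : B (Fin.last m)) :
    f (Fin.snoc a c) ≤ f (Fin.snoc a c') ↔ f (Fin.snoc a' c) ≤ f (Fin.snoc a' c') := by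
  simpa only [Fin.update_snoc_last] using hf (Fin.last m) (Fin.snoc a c) (Fin.snoc a' c) c c'

theorem snoc_update_le_iff (hf : CoordWiseMonotone f) (i : Fin m)
    (a a' : ∀ i : Fin m, B i.castSucc) (c c' : B (Fin.last m)) (b b' : B i.castSucc) :
    f (Fin.snoc (update a i b) c) ≤ f (Fin.snoc (update a i b') c) ↔
      f (Fin.snoc (update a' i b) c') ≤ f (Fin.snoc (update a' i b') c') := by
  simpa only [Fin.snoc_update] using hf i.castSucc (Fin.snoc a c) (Fin.snoc a' c') b b'

theorem snoc (hf : CoordWiseMonotone f) (c : B (Fin.last m)) :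
    CoordWiseMonotone fun a : ∀ i : Fin m, B i.castSucc => f (Fin.snoc a c) :=
  fun i a a' b b' => hf.snoc_update_le_iff i a a' c c b b'

end Snoc

end CoordWiseMonotone

section LevelCut

variable {m : ℕ} {B : Fin (m + 1) → Type} {S : Type} [LinearOrder S]

def levelCut (f : (∀ i, B i) → S) (a₀ : ∀ i : Fin m, B i.castSucc) (l : S)
    (a : ∀ i : Fin m, B i.castSucc) : LowerSet S :=
  lowerClosure ((fun c => f (Fin.snoc a₀ c)) '' {c | f (Fin.snoc a c) < l})

variable {f : (∀ i, B i) → S} {a₀ a a' : ∀ i : Fin m, B i.castSucc} {l : S}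

theorem mem_levelCut_iff (hf : CoordWiseMonotone f) {c : B (Fin.last m)} :
    f (Fin.snoc a₀ c) ∈ levelCut f a₀ l a ↔ f (Fin.snoc a c) < l := by
  simp only [levelCut, mem_lowerClosure, Set.mem_image, Set.mem_ofPred_eq]
  constructor
  · rintro ⟨_, ⟨c', hc', rfl⟩, hle⟩
    exact ((hf.snoc_le_snoc_iff a₀ a c c').1 hle).trans_lt hc'
  · exact fun hc => ⟨_, ⟨c, hc, rfl⟩, le_rfl⟩

theorem levelCut_anti (hle : ∀ c, f (Fin.snoc a c) ≤ f (Fin.snoc a' c)) :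
    levelCut f a₀ l a' ≤ levelCut f a₀ l a :=
  lowerClosure_mono <| Set.image_mono fun c hc => (hle c).trans_lt hc

end LevelCut

/-- Coordinate-splitting presentation of a basic set: for any `r = m + 1 ≥ 1` and any
basic subset `X` of the grid `B₁ × ⋯ × B_r`, there are a linearly ordered set `S`,
a coordinate-wise monotone `f^r : B₁ × ⋯ × B_{r-1} → S` and `f_r : B_r → S` with
`X = {(b^r, b_r) : f^r(b^r) < f_r(b_r)}`. -/
theorem coordinate_splitting_of_basic {m : ℕ} {B : Fin (m + 1) → Type}
    (X : Set (∀ i, B i)) (hX : IsBasicSet X) :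
    ∃ (S : Type) (_ : LinearOrder S)
      (fr : (∀ i : Fin m, B i.castSucc) → S) (flast : B (Fin.last m) → S),
      CoordWiseMonotone fr ∧
      X = {x | fr (fun i => x i.castSucc) < flast (x (Fin.last m))} := by
  obtain ⟨S, _, f, l, hf, rfl⟩ := hX
  rcases isEmpty_or_nonempty (∀ i, B i) with hB | ⟨⟨x₀⟩⟩
  · exact ⟨Unit, inferInstance, fun _ => (), fun _ => (), fun _ _ _ _ _ => Iff.rfl,
      Subsingleton.elim _ _⟩
  set a₀ := Fin.init x₀
  set c₀ := x₀ (Fin.last m)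
  refine ⟨(LowerSet S)ᵒᵈ ×ₗ WithTop S, inferInstance,
    fun a => toLex (toDual (levelCut f a₀ l a), (f (Fin.snoc a c₀) : WithTop S)),
    fun c => toLex (toDual (LowerSet.Iic (f (Fin.snoc a₀ c))), ⊤), ?_, ?_⟩
  · refine ((hf.snoc c₀).comp_strictMono WithTop.coe_strictMono).lex fun i a b b' hle => ?_
    refine levelCut_anti fun c => (hf.snoc_update_le_iff i a a c₀ c b b').1 ?_
    exact WithTop.coe_le_coe.1 hle
  · ext x
    simp only [Set.mem_ofPred_eq, Prod.Lex.toLex_lt_toLex, WithTop.coe_lt_top, and_true,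
      ← le_iff_lt_or_eq, toDual_le_toDual, LowerSet.Iic_le, mem_levelCut_iff hf]
    exact iff_of_eq (congrArg (f · < l) (Fin.snoc_init_self x).symm)
end

section
/- For all integers r ≥ 2, s ≥ 0, k ≥ 2 there exists α = α(r, s, k) ∈ ℝ such that, setting β := s(2^{r-1} − 1): for any (not necessarily finite) r-grid B and any finite K_{k,…,k}-free subset A ⊆ B of grid-complexity at most s, one has |A| ≤ α · δ^r_{r-1}(A) · log^β(δ^r_{r-1}(A) + 1), where δ^r_{r-1}(A) := δ^r_{r-1}(A_1 × ⋯ × A_r) with A_i := π_i(A) the projection of A to B_i. -/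
/-- `A` has grid-complexity `s`: it is the intersection of the grid with
`s` basic sets. -/
def HasGridComplexity {r : ℕ} {B : Fin r → Type} (A : Set (∀ i, B i)) (s : ℕ) : Prop :=
  ∃ X : Fin s → Set (∀ i, B i), (∀ j, IsBasicSet (X j)) ∧ A = ⋂ j, X j

/-- `A ⊆ B₁ × ⋯ × B_r` is `K_{k,…,k}`-free: it contains no sub-grid `C₁ × ⋯ × C_r`
with `|C_i| = k` for all `i`. -/
def KkFree {r : ℕ} {B : Fin r → Type} (A : Set (∀ i, B i)) (k : ℕ) : Prop :=
  ¬ ∃ C : ∀ i, Finset (B i), (∀ i, (C i).card = k) ∧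
      ∀ x : ∀ i, B i, (∀ i, x i ∈ C i) → x ∈ A

/-- `δ^r_{r-1}(A) := δ^r_{r-1}(A₁ × ⋯ × A_r)` where `A_i := π_i(A)` is the projection
of `A` to the `i`-th coordinate, i.e. `Σ_{i ∈ [r]} Π_{j ≠ i} |π_j(A)|`. -/
noncomputable def projDelta {r : ℕ} {B : Fin r → Type} (A : Set (∀ i, B i)) : ℕ :=
  ∑ i : Fin r, ∏ j ∈ Finset.univ.erase i, ((fun x => x j) '' A).ncard

/-!
Every basic set is a down-set for a product of total preorders on the `B i`, and after replacing
each `B i` by the projection `π_i(A)` the grid is finite; we induct on `r`, singling out the last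
coordinate. In a finite total preorder, `z` lies in a down-set `F` iff its strict rank is `< |F|`,
so `(y, z) ∈ A` iff `rank_t z < m_t y` for all `t`, where `m_t y` is the size of the fibre over
`y` of the `t`-th down-set. Sort each pair by the vector of levels of the maximal dyadic
intervals around `rank_t z` inside `[0, m_t y)`; there are `O(log δ)^s` such vectors. For a fixed
level vector the pairs fall into rectangles `Y' × Z' ⊆ A` with pairwise disjoint sides. If
`|Z'| ≥ k`, then `Y'` is `K_{k,…,k}`-free and an intersection of `s` down-sets one dimension
lower, so the induction hypothesis bounds it; otherwise the rectangle has fewer than `k` points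
per row. This yields the exponent `s (r - 1) ≤ s (2^{r-1} - 1)`.
-/

open Finset Function

theorem apply_le_apply_of_update_le {ι : Type*} [Fintype ι] [DecidableEq ι] {β : ι → Type*}
    {S : Type*} [Preorder S] (f : (∀ i, β i) → S) {x y : ∀ i, β i}
    (h : ∀ i z, f (update z i (y i)) ≤ f (update z i (x i))) : f y ≤ f x := by
  suffices ∀ u : Finset ι, f (u.piecewise y x) ≤ f x by simpa using this univ
  intro u
  induction u using Finset.induction_on with
  | empty => simp
  | insert i u hi ih =>
    rw [piecewise_insert]
    calc f (update (u.piecewise y x) i (y i))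
        ≤ f (update (u.piecewise y x) i (x i)) := h i _
      _ = f (u.piecewise y x) := by rw [← u.piecewise_eq_of_notMem y x hi, update_eq_self]
      _ ≤ f x := ih

section GridDownset

variable {r : ℕ} {B : Fin r → Type}

def IsGridDownset (X : Set (∀ i, B i)) : Prop :=
  ∃ le : ∀ i, B i → B i → Prop, (∀ i a b, le i a b ∨ le i b a) ∧
    ∀ ⦃x y : ∀ i, B i⦄, (∀ i, le i (y i) (x i)) → x ∈ X → y ∈ X

def HasDownsetComplexity (A : Set (∀ i, B i)) (s : ℕ) : Prop :=
  ∃ D : Fin s → Set (∀ i, B i), (∀ t, IsGridDownset (D t)) ∧ A = ⋂ t, D t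

theorem IsBasicSet.isGridDownset {X : Set (∀ i, B i)} (hX : IsBasicSet X) : IsGridDownset X := by
  obtain ⟨S, _, f, l, hf, rfl⟩ := hX
  refine ⟨fun i b b' => ∀ z, f (update z i b) ≤ f (update z i b'), fun i b b' => ?_,
    fun x y hyx hx => lt_of_le_of_lt (apply_le_apply_of_update_le f hyx) hx⟩
  by_contra! h
  obtain ⟨⟨z, hz⟩, ⟨z', hz'⟩⟩ := h
  exact hz'.not_ge ((hf i z z' b' b).1 hz.le)

theorem HasGridComplexity.hasDownsetComplexity {A : Set (∀ i, B i)} {s : ℕ}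
    (h : HasGridComplexity A s) : HasDownsetComplexity A s :=
  let ⟨X, hX, hA⟩ := h
  ⟨X, fun t => (hX t).isGridDownset, hA⟩

theorem isGridDownset_univ : IsGridDownset (Set.univ : Set (∀ i, B i)) :=
  ⟨fun _ _ _ => True, fun _ _ _ => Or.inl trivial, fun _ _ _ _ => trivial⟩

theorem HasDownsetComplexity.mono {A : Set (∀ i, B i)} {s s' : ℕ} (h : HasDownsetComplexity A s')
    (hs : s' ≤ s) : HasDownsetComplexity A s := by
  obtain ⟨D, hD, rfl⟩ := h
  refine ⟨fun t => if ht : (t : ℕ) < s' then D ⟨t, ht⟩ else Set.univ,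
    fun t => ?_, Set.ext fun x => ?_⟩
  · dsimp only
    split_ifs
    exacts [hD _, isGridDownset_univ]
  · simp only [Set.mem_iInter]
    refine ⟨fun hx t => ?_, fun hx t => by simpa using hx (Fin.castLE hs t)⟩
    split_ifs
    exacts [hx _, trivial]

variable {B' : Fin r → Type}

theorem IsGridDownset.preimage {X : Set (∀ i, B i)} (hX : IsGridDownset X)
    (φ : ∀ i, B' i → B i) : IsGridDownset (Pi.map φ ⁻¹' X) :=
  let ⟨le, htot, hdown⟩ := hX
  ⟨fun i a b => le i (φ i a) (φ i b), fun i _ _ => htot i _ _,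
    fun _ _ hyx hx => hdown (fun i => hyx i) hx⟩

theorem HasDownsetComplexity.preimage {A : Set (∀ i, B i)} {s : ℕ}
    (h : HasDownsetComplexity A s) (φ : ∀ i, B' i → B i) :
    HasDownsetComplexity (Pi.map φ ⁻¹' A) s :=
  let ⟨D, hD, hA⟩ := h
  ⟨fun t => Pi.map φ ⁻¹' D t, fun t => (hD t).preimage φ, by rw [hA, Set.preimage_iInter]⟩

theorem KkFree.preimage {A : Set (∀ i, B i)} {k : ℕ} (h : KkFree A k) {φ : ∀ i, B' i → B i}
    (hφ : ∀ i, Injective (φ i)) : KkFree (Pi.map φ ⁻¹' A) k := by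
  rintro ⟨C, hC, hCA⟩
  refine h ⟨fun i => (C i).map ⟨φ i, hφ i⟩, fun i => by simpa using hC i, fun x hx => ?_⟩
  choose x' hx'C hx' using fun i => Finset.mem_map.1 (hx i)
  have : Pi.map φ x' = x := funext hx'
  exact this ▸ hCA x' hx'C

end GridDownset

section StrictRank

variable {β : Type*} [Finite β] (le : β → β → Prop)

noncomputable def strictRank (b : β) : ℕ := {b' | le b' b ∧ ¬ le b b'}.ncard

variable {le}

theorem mem_iff_strictRank_lt (htot : ∀ a b, le a b ∨ le b a) {F : Set β}
    (hF : ∀ ⦃a b⦄, le b a → a ∈ F → b ∈ F) (b : β) : b ∈ F ↔ strictRank le b < F.ncard := by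
  constructor
  · intro hb
    have hsub : {b' | le b' b ∧ ¬ le b b'} ⊆ F \ {b} := fun b' ⟨hb'b, hbb'⟩ =>
      ⟨hF hb'b hb, fun h => hbb' (h ▸ hb'b)⟩
    exact (Set.ncard_le_ncard hsub).trans_lt (Set.ncard_sdiff_singleton_lt_of_mem hb)
  · intro hlt
    by_contra hb
    have hsub : F ⊆ {b' | le b' b ∧ ¬ le b b'} := fun b' hb' =>
      have hbb' : ¬ le b b' := fun h => hb (hF h hb')
      ⟨(htot b b').resolve_left hbb', hbb'⟩
    exact (Set.ncard_le_ncard hsub).not_gt hlt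

end StrictRank

theorem exists_div_two_pow_succ_eq (a m : ℕ) : ∃ ℓ, a / 2 ^ (ℓ + 1) = m / 2 ^ (ℓ + 1) :=
  ⟨a + m, by
    rw [Nat.div_eq_of_lt, Nat.div_eq_of_lt] <;>
      exact lt_of_lt_of_le (by omega) (Nat.lt_two_pow_self (n := a + m + 1)).le⟩

/-- For `a < m`, `2 ^ dyadicLevel a m` is the length of the largest dyadic interval containing
`a` and contained in `[0, m)`; the level is the position of the leading bit where `a` and `m`
differ. -/
def dyadicLevel (a m : ℕ) : ℕ := Nat.find (exists_div_two_pow_succ_eq a m)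

theorem div_two_pow_dyadicLevel_add_one {a m : ℕ} (h : a < m) :
    a / 2 ^ dyadicLevel a m + 1 = m / 2 ^ dyadicLevel a m := by
  set ℓ := dyadicLevel a m
  have hℓ : a / 2 ^ (ℓ + 1) = m / 2 ^ (ℓ + 1) := Nat.find_spec (exists_div_two_pow_succ_eq a m)
  rw [pow_succ, ← Nat.div_div_eq_div_mul, ← Nat.div_div_eq_div_mul] at hℓ
  have hne : a / 2 ^ ℓ ≠ m / 2 ^ ℓ := by
    rcases hℓ0 : ℓ with _ | ℓ'
    · simpa using h.ne
    · exact Nat.find_min (exists_div_two_pow_succ_eq a m) (by omega : ℓ' < ℓ)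
  have hle : a / 2 ^ ℓ ≤ m / 2 ^ ℓ := Nat.div_le_div_right h.le
  omega

theorem succ_div_mul_dyadicLevel_le {a m : ℕ} (h : a < m) :
    (a / 2 ^ dyadicLevel a m + 1) * 2 ^ dyadicLevel a m ≤ m := by
  rw [div_two_pow_dyadicLevel_add_one h]
  exact Nat.div_mul_le_self _ _

theorem dyadicLevel_le_log {a m : ℕ} (h : a < m) : dyadicLevel a m ≤ Nat.log 2 m :=
  Nat.le_log_of_pow_le one_lt_two <|
    (Nat.le_mul_of_pos_left _ (Nat.succ_pos _)).trans (succ_div_mul_dyadicLevel_le h)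

theorem sum_card_image_fiber_le {α ι γ : Type*} [DecidableEq ι] [DecidableEq γ] [Fintype γ]
    (A : Finset α) (φ : α → ι) (π : α → γ)
    (hφ : ∀ p ∈ A, ∀ p' ∈ A, π p = π p' → φ p = φ p') :
    ∑ i ∈ A.image φ, ({p ∈ A | φ p = i}.image π).card ≤ Fintype.card γ := by
  rw [← card_biUnion]
  · exact card_le_univ _
  · intro i _ j _ hij
    refine disjoint_left.2 fun c hci hcj => hij ?_
    obtain ⟨p, hp, rfl⟩ := mem_image.1 hci
    obtain ⟨p', hp', hpp'⟩ := mem_image.1 hcj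
    rw [mem_filter] at hp hp'
    rw [← hp.2, ← hp'.2, hφ p' hp'.1 p hp.1 hpp']

/-- The fibres of `φ` lie in rectangles whose sides are pairwise disjoint. -/
theorem card_le_of_const_on_rows_cols {Y Z ι : Type*} [Fintype Y] [Fintype Z] [DecidableEq Y]
    [DecidableEq Z] [DecidableEq ι] (A : Finset (Y × Z)) (φ : Y × Z → ι)
    (hrow : ∀ p ∈ A, ∀ p' ∈ A, p.1 = p'.1 → φ p = φ p')
    (hcol : ∀ p ∈ A, ∀ p' ∈ A, p.2 = p'.2 → φ p = φ p') {k : ℕ} {M : ℝ} (hM : 0 ≤ M)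
    (hfib : ∀ i, k ≤ ({p ∈ A | φ p = i}.image Prod.snd).card →
      (({p ∈ A | φ p = i}.image Prod.fst).card : ℝ) ≤ M) :
    (A.card : ℝ) ≤ Fintype.card Z * M + k * Fintype.card Y := by
  set F : ι → Finset (Y × Z) := fun i => {p ∈ A | φ p = i}
  have hF : ∀ i, ((F i).card : ℝ) ≤
      ((F i).image Prod.snd).card * M + k * ((F i).image Prod.fst).card := by
    intro i
    set a := ((F i).image Prod.snd).card
    set b := ((F i).image Prod.fst).card
    have hprod : ((F i).card : ℝ) ≤ b * a := by
      exact_mod_cast (card_le_card subset_product).trans (card_product _ _).le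
    by_cases hk : k ≤ a
    · calc ((F i).card : ℝ) ≤ b * a := hprod
        _ ≤ M * a := by gcongr; exact hfib i hk
        _ ≤ a * M + k * b := by rw [mul_comm]; exact le_add_of_nonneg_right (by positivity)
    · calc ((F i).card : ℝ) ≤ b * a := hprod
        _ ≤ b * k := by gcongr; exact_mod_cast (not_le.1 hk).le
        _ ≤ a * M + k * b := by rw [mul_comm]; exact le_add_of_nonneg_left (by positivity)
  have hcols : ∑ i ∈ A.image φ, (((F i).image Prod.snd).card : ℝ) ≤ Fintype.card Z := by
    exact_mod_cast sum_card_image_fiber_le A φ Prod.snd hcol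
  have hrows : ∑ i ∈ A.image φ, (((F i).image Prod.fst).card : ℝ) ≤ Fintype.card Y := by
    exact_mod_cast sum_card_image_fiber_le A φ Prod.fst hrow
  calc (A.card : ℝ) = ∑ i ∈ A.image φ, ((F i).card : ℝ) := by
        exact_mod_cast card_eq_sum_card_image φ A
    _ ≤ ∑ i ∈ A.image φ, (((F i).image Prod.snd).card * M + k * ((F i).image Prod.fst).card) :=
        sum_le_sum fun i _ => hF i
    _ = (∑ i ∈ A.image φ, (((F i).image Prod.snd).card : ℝ)) * M +
          k * ∑ i ∈ A.image φ, (((F i).image Prod.fst).card : ℝ) := by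
        rw [sum_add_distrib, sum_mul, mul_sum]
    _ ≤ Fintype.card Z * M + k * Fintype.card Y := by gcongr

section DyadicCount

variable {Y Z : Type*} [Fintype Y] [Fintype Z] [DecidableEq Y] [DecidableEq Z] {s : ℕ}
  (g : Fin s → Z → ℕ) (m : Fin s → Y → ℕ) {k : ℕ} {M : ℝ}

/-- Within one vector `lam` of dyadic levels, the quotient `g t z / 2 ^ lam t` is determined by `z`,
and also by `y` (it is `m t y / 2 ^ lam t - 1`), so the bipartite bound applies. -/
theorem card_dyadicLevel_eq_le (hM0 : 0 ≤ M)
    (hM : ∀ c : Fin s → ℕ, ∀ Z' : Finset Z, k ≤ Z'.card → (∀ z ∈ Z', ∀ t, g t z < c t) →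
      (#{y | ∀ t, c t ≤ m t y} : ℝ) ≤ M) (lam : Fin s → ℕ) :
    (#{p : Y × Z | (∀ t, g t p.2 < m t p.1) ∧
        (fun t => dyadicLevel (g t p.2) (m t p.1)) = lam} : ℝ) ≤
      Fintype.card Z * M + k * Fintype.card Y := by
  have hquot : ∀ p : Y × Z, (∀ t, g t p.2 < m t p.1) →
      (fun t => dyadicLevel (g t p.2) (m t p.1)) = lam →
      ∀ t, g t p.2 / 2 ^ lam t + 1 = m t p.1 / 2 ^ lam t := by
    rintro p hp rfl t
    exact div_two_pow_dyadicLevel_add_one (hp t)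
  refine card_le_of_const_on_rows_cols _ (fun p t => g t p.2 / 2 ^ lam t) ?_ ?_ hM0 ?_
  · intro p hp p' hp' hpp'
    simp only [mem_filter, mem_univ, true_and] at hp hp'
    funext t
    have := hquot p hp.1 hp.2 t
    have := hquot p' hp'.1 hp'.2 t
    rw [hpp'] at *
    omega
  · intro p _ p' _ hpp'
    rw [hpp']
  · intro q hk
    refine le_trans ?_ (hM (fun t => (q t + 1) * 2 ^ lam t) _ hk ?_)
    · gcongr
      intro y hy
      obtain ⟨p, hp, rfl⟩ := mem_image.1 hy
      simp only [mem_filter, mem_univ, true_and] at hp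
      obtain ⟨⟨hpA, hplam⟩, rfl⟩ := hp
      refine mem_filter.2 ⟨mem_univ _, fun t => ?_⟩
      rw [hquot p hpA hplam t]
      exact Nat.div_mul_le_self _ _
    · intro z hz t
      obtain ⟨p, hp, rfl⟩ := mem_image.1 hz
      obtain ⟨-, rfl⟩ := mem_filter.1 hp
      rw [add_one_mul]
      exact Nat.lt_div_mul_add (by positivity)

theorem card_le_of_dyadic {N : ℕ} (hM0 : 0 ≤ M) (hmN : ∀ t y, m t y ≤ N)
    (hM : ∀ c : Fin s → ℕ, ∀ Z' : Finset Z, k ≤ Z'.card → (∀ z ∈ Z', ∀ t, g t z < c t) →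
      (#{y | ∀ t, c t ≤ m t y} : ℝ) ≤ M) :
    (#{p : Y × Z | ∀ t, g t p.2 < m t p.1} : ℝ) ≤
      (Nat.log 2 N + 1) ^ s * (Fintype.card Z * M + k * Fintype.card Y) := by
  set A : Finset (Y × Z) := {p | ∀ t, g t p.2 < m t p.1}
  set Λ : Finset (Fin s → ℕ) := Fintype.piFinset fun _ => range (Nat.log 2 N + 1)
  have hlevel : Set.MapsTo (fun p : Y × Z => fun t => dyadicLevel (g t p.2) (m t p.1)) A Λ :=
    fun p hp => Fintype.mem_piFinset.2 fun t => mem_range_succ_iff.2 <|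
      (dyadicLevel_le_log ((mem_filter.1 hp).2 t)).trans (Nat.log_mono_right (hmN t _))
  rw [card_eq_sum_card_fiberwise hlevel]
  push_cast
  calc ∑ lam ∈ Λ, _ ≤ ∑ _lam ∈ Λ, (Fintype.card Z * M + k * Fintype.card Y) :=
        sum_le_sum fun lam _ => by rw [filter_filter]; exact card_dyadicLevel_eq_le g m hM0 hM lam
    _ = (Nat.log 2 N + 1) ^ s * (Fintype.card Z * M + k * Fintype.card Y) := by
        rw [sum_const, Fintype.card_piFinset, prod_const, card_range, card_univ, Fintype.card_fin,
          nsmul_eq_mul]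
        push_cast
        ring

end DyadicCount

section GridDelta

noncomputable def gridDelta {r : ℕ} (B : Fin r → Type) : ℕ :=
  ∑ i, ∏ j ∈ univ.erase i, Nat.card (B j)

theorem projDelta_eq_gridDelta {r : ℕ} {B : Fin r → Type} (A : Set (∀ i, B i)) :
    projDelta A = gridDelta fun i => (fun x => x i) '' A :=
  rfl

theorem le_gridDelta {r : ℕ} {B : Fin r → Type} [∀ i, Finite (B i)] [∀ i, Nonempty (B i)] :
    r ≤ gridDelta B :=
  calc r = ∑ _i : Fin r, 1 := by simp
    _ ≤ gridDelta B := sum_le_sum fun _ _ => prod_pos fun _ _ => Nat.card_pos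

theorem prod_erase_castSucc {M : Type*} [CommMonoid M] {r : ℕ} (f : Fin (r + 1) → M) (i : Fin r) :
    ∏ j ∈ univ.erase i.castSucc, f j = (∏ j ∈ univ.erase i, f j.castSucc) * f (Fin.last r) := by
  have key : ∀ {n : ℕ} (f : Fin n → M) (a : Fin n), ∏ j ∈ univ.erase a, f j = ∏ j, update f a 1 j :=
    fun f a => by rw [prod_update_of_mem (mem_univ a), one_mul, sdiff_singleton_eq_erase]
  rw [key, key, Fin.prod_univ_castSucc, update_of_ne (Fin.castSucc_lt_last i).ne']
  congr 1
  exact prod_congr rfl fun j _ => by simp only [update_apply, Fin.castSucc_inj]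

variable {r : ℕ} {B : Fin (r + 1) → Type}

theorem card_last_mul_gridDelta_le :
    Nat.card (B (Fin.last r)) * gridDelta (fun i => B i.castSucc) ≤ gridDelta B := by
  rw [gridDelta, gridDelta, Fin.sum_univ_castSucc, mul_sum]
  refine le_add_right (sum_le_sum fun i _ => ?_)
  rw [prod_erase_castSucc, mul_comm]

theorem card_pi_castSucc_le_gridDelta :
    Nat.card (∀ i : Fin r, B i.castSucc) ≤ gridDelta B := by
  rw [Nat.card_pi, gridDelta, Fin.sum_univ_castSucc, ← compl_singleton, ← Fin.image_castSucc,
    prod_image fun i _ j _ h => Fin.castSucc_injective r h]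
  exact le_add_left le_rfl

end GridDelta

theorem ncard_eq_card_filter {α : Type*} [Fintype α] (p : α → Prop) [DecidablePred p] :
    {x | p x}.ncard = #{x | p x} := by
  rw [← Set.ncard_coe_finset, coe_filter_univ]

section Snoc

variable {r : ℕ} {B : Fin (r + 1) → Type}

theorem ncard_eq_card_filter_snoc [∀ i, Fintype (B i)] (A : Set (∀ i, B i))
    [DecidablePred fun p : (∀ i : Fin r, B i.castSucc) × B (Fin.last r) => Fin.snoc p.1 p.2 ∈ A] :
    A.ncard = #{p : (∀ i : Fin r, B i.castSucc) × B (Fin.last r) | Fin.snoc p.1 p.2 ∈ A} := by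
  rw [← ncard_eq_card_filter, ← Set.ncard_preimage_of_injective_subset_range
    (f := fun p : (∀ i : Fin r, B i.castSucc) × B (Fin.last r) => Fin.snoc p.1 p.2)]
  · rfl
  · exact fun p q h => Prod.ext_iff.2 (Fin.snoc_injective2 h)
  · exact fun x _ => ⟨(Fin.init x, x (Fin.last r)), Fin.snoc_init_self x⟩

theorem KkFree.of_forall_snoc_mem {A : Set (∀ i, B i)} {k : ℕ} (hA : KkFree A k)
    {Z : Finset (B (Fin.last r))} (hZ : k ≤ Z.card) {Y : Set (∀ i : Fin r, B i.castSucc)}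
    (hYZ : ∀ y ∈ Y, ∀ z ∈ Z, Fin.snoc y z ∈ A) : KkFree Y k := by
  rintro ⟨C, hC, hCY⟩
  obtain ⟨Z', hZ'Z, hZ'⟩ := exists_subset_card_eq hZ
  refine hA ⟨Fin.snoc (α := fun i => Finset (B i)) C Z', fun i => ?_, fun x hx => ?_⟩
  · cases i using Fin.lastCases with
    | last => simpa using hZ'
    | cast i => simpa using hC i
  · rw [← Fin.snoc_init_self x]
    refine hYZ _ (hCY _ fun i => ?_) _ (hZ'Z (by simpa using hx (Fin.last r)))
    simpa [Fin.init] using hx i.castSucc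

variable {le : ∀ i, B i → B i → Prop} {D : Set (∀ i, B i)}

theorem snoc_mem_iff_strictRank_lt [Finite (B (Fin.last r))] (htot : ∀ i a b, le i a b ∨ le i b a)
    (hD : ∀ ⦃x y : ∀ i, B i⦄, (∀ i, le i (y i) (x i)) → x ∈ D → y ∈ D)
    (y : ∀ i : Fin r, B i.castSucc) (z : B (Fin.last r)) :
    Fin.snoc y z ∈ D ↔ strictRank (le (Fin.last r)) z < {z | Fin.snoc y z ∈ D}.ncard := by
  refine mem_iff_strictRank_lt (htot _) (fun a b hba ha => hD (Fin.lastCases ?_ fun i => ?_) ha) z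
  · simpa using hba
  · simpa using (htot _ (y i) (y i)).elim id id

theorem ncard_snoc_mem_le [Finite (B (Fin.last r))] (htot : ∀ i a b, le i a b ∨ le i b a)
    (hD : ∀ ⦃x y : ∀ i, B i⦄, (∀ i, le i (y i) (x i)) → x ∈ D → y ∈ D)
    {y y' : ∀ i : Fin r, B i.castSucc} (hy : ∀ i, le i.castSucc (y' i) (y i)) :
    {z | Fin.snoc y z ∈ D}.ncard ≤ {z | Fin.snoc y' z ∈ D}.ncard :=
  Set.ncard_le_ncard fun z hz => hD (Fin.lastCases (by simpa using (htot _ z z).elim id id)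
    fun i => by simpa using hy i) hz

end Snoc

theorem log_natCast_add_one_nonneg (n : ℕ) : 0 ≤ Real.log (n + 1) :=
  Real.log_nonneg (le_add_of_nonneg_left n.cast_nonneg)

theorem one_le_log_add_one {x : ℝ} (hx : 2 ≤ x) : 1 ≤ Real.log (x + 1) := by
  rw [Real.le_log_iff_exp_le (by linarith)]
  linarith [Real.exp_one_lt_d9]

theorem natLog_two_add_one_le {n : ℕ} {x : ℝ} (hn : (n : ℝ) ≤ x) (hx : 2 ≤ x) :
    (Nat.log 2 n + 1 : ℝ) ≤ ((Real.log 2)⁻¹ + 1) * Real.log (x + 1) := by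
  have hL := one_le_log_add_one hx
  have hlog : Real.log n ≤ Real.log (x + 1) := by
    rcases n.eq_zero_or_pos with rfl | hn0
    · simpa using hL.trans' zero_le_one
    · exact Real.log_le_log (by exact_mod_cast hn0) (by linarith)
  have h2 : (Nat.log 2 n : ℝ) ≤ (Real.log 2)⁻¹ * Real.log (x + 1) := by
    refine (Real.natLog_le_logb n 2).trans ?_
    rw [Real.logb, div_eq_inv_mul, Nat.cast_ofNat]
    gcongr
  linarith

theorem natLog_succ_pow_mul_add_le {α : ℝ} (hα0 : 0 ≤ α) (s k e : ℕ) {n Δ Y δ : ℕ} (hn : 1 ≤ n)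
    (hΔ : 1 ≤ Δ) (hnΔ : n * Δ ≤ δ) (hY : Y ≤ δ) (hδ : 2 ≤ δ) :
    (Nat.log 2 n + 1 : ℝ) ^ s * (n * (α * Δ * Real.log (Δ + 1) ^ e) + k * Y) ≤
      ((Real.log 2)⁻¹ + 1) ^ s * (α + k) * δ * Real.log (δ + 1) ^ (s + e) := by
  have hnΔ : (n * Δ : ℝ) ≤ δ := by exact_mod_cast hnΔ
  have hY : (Y : ℝ) ≤ δ := by exact_mod_cast hY
  have hn : (1 : ℝ) ≤ n := by exact_mod_cast hn
  have hΔ : (1 : ℝ) ≤ Δ := by exact_mod_cast hΔ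
  have hδ : (2 : ℝ) ≤ δ := by exact_mod_cast hδ
  set L := Real.log (δ + 1)
  have hL : 1 ≤ L := one_le_log_add_one hδ
  have hL0 : 0 ≤ L := zero_le_one.trans hL
  have hlogΔ : Real.log (Δ + 1) ≤ L := Real.log_le_log (by positivity) (by nlinarith)
  have hlog0 := log_natCast_add_one_nonneg Δ
  have h1 : n * (α * Δ * Real.log (Δ + 1) ^ e) ≤ α * δ * L ^ e :=
    calc n * (α * Δ * Real.log (Δ + 1) ^ e) = α * (n * Δ) * Real.log (Δ + 1) ^ e := by ring
      _ ≤ α * δ * L ^ e := by gcongr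
  have h2 : k * (Y : ℝ) ≤ k * δ * L ^ e :=
    calc k * (Y : ℝ) ≤ k * δ := by gcongr
      _ ≤ k * δ * L ^ e := le_mul_of_one_le_right (by positivity) (one_le_pow₀ hL)
  calc (Nat.log 2 n + 1 : ℝ) ^ s * (n * (α * Δ * Real.log (Δ + 1) ^ e) + k * Y)
      ≤ (((Real.log 2)⁻¹ + 1) * L) ^ s * ((α + k) * δ * L ^ e) :=
        mul_le_mul (pow_le_pow_left₀ (by positivity) (natLog_two_add_one_le (by nlinarith) hδ) s)
          (by linarith) (by have := pow_nonneg hlog0 e; positivity) (pow_nonneg (by positivity) s)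
    _ = ((Real.log 2)⁻¹ + 1) ^ s * (α + k) * δ * L ^ (s + e) := by
        rw [pow_add, mul_pow]
        ring

def ZarankiewiczBound (r s k : ℕ) (α : ℝ) : Prop :=
  ∀ (B : Fin r → Type) [∀ i, Finite (B i)] (A : Set (∀ i, B i)), HasDownsetComplexity A s →
    KkFree A k → (A.ncard : ℝ) ≤ α * gridDelta B * Real.log (gridDelta B + 1) ^ (s * (r - 1))

theorem KkFree.ncard_lt_of_fin_one {B : Fin 1 → Type} [Finite (B 0)] {A : Set (∀ i, B i)} {k : ℕ}
    (hA : KkFree A k) : A.ncard < k := by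
  by_contra! hk
  have hinj : Injective fun x : ∀ i, B i => x 0 := (Equiv.piUnique B).injective
  rw [← Set.ncard_image_of_injective A hinj, Set.ncard_eq_toFinset_card _ (Set.toFinite _)] at hk
  obtain ⟨T, hT, hTk⟩ := exists_subset_card_eq hk
  refine hA ⟨Fin.cons (α := fun i => Finset (B i)) T finZeroElim, Fin.forall_fin_one.2 hTk,
    fun x hx => ?_⟩
  obtain ⟨a, ha, hax⟩ : x 0 ∈ (fun x : ∀ i, B i => x 0) '' A := by simpa using hT (hx 0)
  rwa [← hinj hax]

theorem zarankiewiczBound_one (s k : ℕ) : ZarankiewiczBound 1 s k k := by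
  intro B _ A _ hA
  simpa [gridDelta] using hA.ncard_lt_of_fin_one.le

theorem ncard_le_of_zarankiewiczBound {r s k : ℕ} {α : ℝ} (hα0 : 0 ≤ α)
    (hα : ZarankiewiczBound r s k α) {B : Fin (r + 1) → Type} [∀ i, Finite (B i)]
    {A : Set (∀ i, B i)} (hA : HasDownsetComplexity A s) (hfree : KkFree A k) :
    (A.ncard : ℝ) ≤ (Nat.log 2 (Nat.card (B (Fin.last r))) + 1) ^ s *
      (Nat.card (B (Fin.last r)) * (α * gridDelta (fun i => B i.castSucc) *
        Real.log (gridDelta (fun i => B i.castSucc) + 1) ^ (s * (r - 1))) +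
        k * Nat.card (∀ i : Fin r, B i.castSucc)) := by
  classical
  have := fun i => Fintype.ofFinite (B i)
  obtain ⟨D, hD, rfl⟩ := hA
  choose le htot hdown using hD
  set m : Fin s → (∀ i : Fin r, B i.castSucc) → ℕ := fun t y => {z | Fin.snoc y z ∈ D t}.ncard
  have hmem : ∀ y z, Fin.snoc y z ∈ ⋂ t, D t ↔ ∀ t, strictRank (le t (Fin.last r)) z < m t y :=
    fun y z => by
      simp only [Set.mem_iInter]
      exact forall_congr' fun t => snoc_mem_iff_strictRank_lt (htot t) (hdown t) y z
  rw [ncard_eq_card_filter_snoc, filter_congr fun p _ => hmem p.1 p.2, Nat.card_eq_fintype_card,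
    Nat.card_eq_fintype_card]
  have := log_natCast_add_one_nonneg (gridDelta fun i => B i.castSucc)
  refine card_le_of_dyadic _ m (by positivity) (fun t y => ?_) fun c Z hZ hZc => ?_
  · exact (Set.ncard_le_card _).trans_eq Nat.card_eq_fintype_card
  · set Yc : Set (∀ i : Fin r, B i.castSucc) := {y | ∀ t, c t ≤ m t y}
    have hYc : HasDownsetComplexity Yc s :=
      ⟨fun t => {y | c t ≤ m t y}, fun t => ⟨fun i => le t i.castSucc, fun i => htot t _,
        fun _ _ hy' hy => hy.trans (ncard_snoc_mem_le (htot t) (hdown t) hy')⟩,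
        by ext; simp [Yc]⟩
    have hYfree : KkFree Yc k := hfree.of_forall_snoc_mem hZ fun y hy z hz =>
      (hmem y z).2 fun t => (hZc z hz t).trans_le (hy t)
    rw [← ncard_eq_card_filter]
    exact hα _ Yc hYc hYfree

theorem zarankiewiczBound_succ {r s k : ℕ} {α : ℝ} (hr : 1 ≤ r) (hα0 : 0 ≤ α)
    (hα : ZarankiewiczBound r s k α) :
    ZarankiewiczBound (r + 1) s k (((Real.log 2)⁻¹ + 1) ^ s * (α + k)) := by
  intro B _ A hA hfree
  rcases A.eq_empty_or_nonempty with rfl | ⟨a, -⟩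
  · simp only [Set.ncard_empty, Nat.cast_zero]
    have := log_natCast_add_one_nonneg (gridDelta B)
    positivity
  have : ∀ i, Nonempty (B i) := fun i => ⟨a i⟩
  have hexp : s * (r + 1 - 1) = s + s * (r - 1) := by
    obtain ⟨r, rfl⟩ := Nat.exists_eq_add_of_le' hr
    rw [Nat.add_sub_cancel, Nat.add_sub_cancel, Nat.mul_succ, add_comm]
  rw [hexp]
  exact (ncard_le_of_zarankiewiczBound hα0 hα hA hfree).trans <|
    natLog_succ_pow_mul_add_le hα0 s k _ Nat.card_pos (hr.trans le_gridDelta)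
      card_last_mul_gridDelta_le card_pi_castSucc_le_gridDelta
      ((by omega : 2 ≤ r + 1).trans le_gridDelta)

theorem exists_zarankiewiczBound (s k : ℕ) {r : ℕ} (hr : 1 ≤ r) :
    ∃ α, 0 ≤ α ∧ ZarankiewiczBound r s k α := by
  induction r, hr using Nat.le_induction with
  | base => exact ⟨k, k.cast_nonneg, zarankiewiczBound_one s k⟩
  | succ r hr ih =>
    obtain ⟨α, hα0, hα⟩ := ih
    exact ⟨_, by positivity, zarankiewiczBound_succ hr hα0 hα⟩

theorem ncard_preimage_val_proj {r : ℕ} {B : Fin r → Type} (A : Set (∀ i, B i)) :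
    (Pi.map (fun i (b : (fun x => x i) '' A) => (b : B i)) ⁻¹' A).ncard = A.ncard :=
  Set.ncard_preimage_of_injective_subset_range
    (fun _ _ h => funext fun i => Subtype.val_injective (congrFun h i))
    fun a ha => ⟨fun i => ⟨a i, a, ha, rfl⟩, rfl⟩

theorem zarankiewicz_bound_projections_general (r s k : ℕ) (hr : 2 ≤ r) :
    ∃ α : ℝ, ∀ (B : Fin r → Type) (A : Set (∀ i, B i)), A.Finite →
      (∃ s' ≤ s, HasGridComplexity A s') → KkFree A k →
      (A.ncard : ℝ) ≤ α * (projDelta A : ℝ) *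
        Real.log ((projDelta A : ℝ) + 1) ^ (s * (2 ^ (r - 1) - 1)) := by
  obtain ⟨α, hα0, hα⟩ := exists_zarankiewiczBound s k (r := r) (by omega)
  refine ⟨α, fun B A hfin ⟨s', hs', hA⟩ hfree => ?_⟩
  rcases A.eq_empty_or_nonempty with rfl | ⟨a, ha⟩
  · simp only [Set.ncard_empty, Nat.cast_zero]
    have := log_natCast_add_one_nonneg (projDelta (∅ : Set (∀ i, B i)))
    positivity
  have := fun i => (hfin.image fun x => x i).to_subtype
  have := fun i => (⟨⟨a i, a, ha, rfl⟩⟩ : Nonempty ((fun x => x i) '' A))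
  have hbound := hα (fun i => (fun x => x i) '' A) _ ((hA.hasDownsetComplexity.mono hs').preimage _)
    (hfree.preimage fun i => Subtype.val_injective)
  rw [ncard_preimage_val_proj, ← projDelta_eq_gridDelta] at hbound
  refine hbound.trans (mul_le_mul_of_nonneg_left (pow_le_pow_right₀ ?_ ?_) (by positivity))
  · exact one_le_log_add_one (by exact_mod_cast hr.trans le_gridDelta)
  · exact Nat.mul_le_mul_left s (by have := Nat.lt_two_pow_self (n := r - 1); omega)

/-- Zarankiewicz bound for finite `K_{k,…,k}`-free subsets of grid-complexity at most `s`
of an arbitrary `r`-grid, in terms of `δ^r_{r-1}` of the projections of `A`. -/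
theorem zarankiewicz_bound_projections (r s k : ℕ) (hr : 2 ≤ r) (hk : 2 ≤ k) :
    ∃ α : ℝ, ∀ (B : Fin r → Type) (A : Set (∀ i, B i)), A.Finite →
      (∃ s' ≤ s, HasGridComplexity A s') → KkFree A k →
      (A.ncard : ℝ) ≤ α * (projDelta A : ℝ) *
        Real.log ((projDelta A : ℝ) + 1) ^ (s * (2 ^ (r - 1) - 1)) :=
  zarankiewicz_bound_projections_general r s k hr
end
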